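/- Among triples (α, β, γ) of angles in (0, π) with α + β + γ = π, the sum Λ(α) + Λ(β) + Λ(γ) is maximized exactly at α = β = γ = π/3; in particular Λ(α)+Λ(β)+Λ(γ) ≤ 3Λ(π/3) with equality if and only if α = β = γ = π/3. -/

import Mathlib

open Real MeasureTheory intervalIntegral Set

namespace LobachevskyAux

/-- The integrand of the Lobachevsky function. -/
noncomputable def F (u : ℝ) : ℝ := Real.log |2 * Real.sin u|

lemma sin_le_sin_of_sum_le_pi {x y : ℝ} (hx : 0 ≤ x) (hxy : x ≤ y) (hsum : x + y ≤ π) :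
    Real.sin x ≤ Real.sin y := by
  have h := Real.sin_sub_sin x y
  have hy : y ≤ π := by linarith
  have h1 : Real.sin ((x - y) / 2) ≤ 0 := by
    apply Real.sin_nonpos_of_nonpos_of_neg_pi_le <;> linarith
  have h2 : 0 ≤ Real.cos ((x + y) / 2) := by
    apply Real.cos_nonneg_of_mem_Icc
    rw [Set.mem_Icc]; constructor <;> linarith
  nlinarith

lemma sin_lt_sin_of_sum_lt_pi {x y : ℝ} (hx : 0 < x) (hxy : x < y) (hsum : x + y < π) :
    Real.sin x < Real.sin y := by
  have h := Real.sin_sub_sin x y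
  have h1 : Real.sin ((x - y) / 2) < 0 := by
    apply Real.sin_neg_of_neg_of_neg_pi_lt <;> linarith
  have h2 : 0 < Real.cos ((x + y) / 2) := by
    apply Real.cos_pos_of_mem_Ioo
    rw [Set.mem_Ioo]; constructor <;> linarith

  nlinarith

lemma continuousOn_F {s t : ℝ} (hs : 0 < s) (ht : t < π) : ContinuousOn F (Icc s t) := by
  apply ContinuousOn.log
  · exact ((continuous_const.mul Real.continuous_sin).abs).continuousOn
  · intro x hx
    have : 0 < Real.sin x := Real.sin_pos_of_pos_of_lt_pi (hs.trans_le hx.1) (lt_of_le_of_lt hx.2 ht)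
    simp only [abs_ne_zero]
    positivity

lemma intervalIntegrable_F {b : ℝ} (hb : 0 < b) (hb' : b < π) :
    IntervalIntegrable F volume 0 b := by
  set c : ℝ := min b (1/2) with hc_def
  have hc0 : 0 < c := lt_min hb (by norm_num)
  have hc2 : c ≤ 1/2 := min_le_right _ _
  have hcb : c ≤ b := min_le_left _ _
  have h1 : IntervalIntegrable F volume 0 c := by
    rw [intervalIntegrable_iff_integrableOn_Ioc_of_le hc0.le]
    have hneglog : IntegrableOn (fun x : ℝ => -Real.log x) (Ioc 0 c) volume := by
      apply intervalIntegral.integrableOn_deriv_of_nonneg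
        (g := fun x : ℝ => x - x * Real.log x)
      · exact (continuous_id.sub Real.continuous_mul_log).continuousOn
      · intro x hx
        have hd := Real.hasDerivAt_mul_log (ne_of_gt hx.1)
        have := (hasDerivAt_id x).sub hd
        exact this.congr_deriv (by ring)
      · intro x hx
        have : Real.log x ≤ 0 := Real.log_nonpos hx.1.le (by linarith [hx.2, hc2])
        linarith
    apply Integrable.mono' hneglog
    · exact (Real.measurable_log.comp
        ((Real.measurable_sin.const_mul 2).abs)).aestronglyMeasurable
    · rw [ae_restrict_iff' measurableSet_Ioc]
      filter_upwards with u hu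
      have hu0 : 0 < u := hu.1
      have huc : u ≤ c := hu.2
      have hupi2 : u ≤ π / 2 := by nlinarith [Real.pi_gt_three]
      have hsinpos : 0 < Real.sin u := Real.sin_pos_of_pos_of_lt_pi hu0 (by nlinarith [Real.pi_gt_three])
      have hlow : u ≤ 2 * Real.sin u := by
        have := Real.mul_le_sin hu0.le hupi2
        have hpi4 : π ≤ 4 := by nlinarith [Real.pi_lt_d2]
        have : 2 / π * u ≤ Real.sin u := this
        have h2pi : (1:ℝ)/2 ≤ 2 / π := by
          rw [div_le_div_iff₀ (by norm_num) Real.pi_pos]; linarith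
        nlinarith [Real.pi_pos]
      have hhigh : 2 * Real.sin u ≤ 1 := by
        have := Real.sin_le hu0.le
        nlinarith
      have habs : |2 * Real.sin u| = 2 * Real.sin u := abs_of_pos (by positivity)
      have hlog_le : Real.log u ≤ Real.log (2 * Real.sin u) :=
        Real.log_le_log hu0 hlow
      have hlog_np : Real.log (2 * Real.sin u) ≤ 0 :=
        Real.log_nonpos (by positivity) hhigh
      have hlogu_np : Real.log u ≤ 0 := Real.log_nonpos hu0.le (by linarith)
      simp only [F, habs, Real.norm_eq_abs, abs_of_nonpos hlog_np]
      linarith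
  have h2 : IntervalIntegrable F volume c b := by
    apply ContinuousOn.intervalIntegrable
    rw [uIcc_of_le hcb]
    exact continuousOn_F hc0 hb'
  exact h1.trans h2

lemma intervalIntegrable_F' {a b : ℝ} (ha : 0 < a) (ha' : a < π) (hb : 0 < b) (hb' : b < π) :
    IntervalIntegrable F volume a b :=
  (intervalIntegrable_F ha ha').symm.trans (intervalIntegrable_F hb hb')

section Lam

variable (Λ : ℝ → ℝ) (hΛ : ∀ θ : ℝ, Λ θ = -∫ u in (0:ℝ)..θ, Real.log |2 * Real.sin u|)

include hΛ

lemma lam_diff {a b : ℝ} (ha : 0 < a) (ha' : a < π) (hb : 0 < b) (hb' : b < π) :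
    Λ b = Λ a - ∫ u in a..b, F u := by
  have h := intervalIntegral.integral_add_adjacent_intervals
    (intervalIntegrable_F ha ha') (intervalIntegrable_F' ha ha' hb hb')
  have hΛa := hΛ a
  have hΛb := hΛ b
  simp only [show (fun u : ℝ => Real.log |2 * Real.sin u|) = F from rfl] at hΛa hΛb
  rw [hΛa, hΛb, ← h]
  ring

/-- The key smoothing lemma: pushing the two outer angles together strictly increases the sum. -/
lemma key {a a' g' g : ℝ} (ha : 0 < a) (h1 : a < a') (h2 : a' ≤ g') (h3 : g' ≤ g)
    (hsum : a + g = a' + g') (hlt : a + g < π) :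
    Λ a + Λ g < Λ a' + Λ g' := by
  have hg_pi : g < π := by linarith
  have hg'0 : 0 < g' := by linarith
  have ha'0 : 0 < a' := by linarith
  have ha'pi : a' < π := by linarith
  have hg'pi : g' < π := by linarith
  have hg0 : 0 < g := by linarith
  -- the reflected integrand
  have hI : (∫ x in a..a', F x) < ∫ x in a..a', F (a + g - x) := by
    apply intervalIntegral.integral_lt_integral_of_continuousOn_of_le_of_exists_lt h1
    · exact (continuousOn_F ha ha'pi).mono (Icc_subset_Icc le_rfl le_rfl)
    · apply (continuousOn_F hg'0 hg_pi).comp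
        ((continuous_const.sub continuous_id).continuousOn)
      intro x hx
      constructor
      · simp only [Pi.sub_apply, id]; linarith [hx.2]
      · simp only [Pi.sub_apply, id]; linarith [hx.1]
    · intro x hx
      have hx0 : 0 < x := lt_trans ha hx.1
      have hxle : x ≤ a + g - x := by linarith [hx.2]
      have hsin : Real.sin x ≤ Real.sin (a + g - x) :=
        sin_le_sin_of_sum_le_pi hx0.le hxle (by linarith)
      have hsx : 0 < Real.sin x :=
        Real.sin_pos_of_pos_of_lt_pi hx0 (by linarith [hx.2])
      simp only [F, abs_of_pos (by positivity : (0:ℝ) < 2 * Real.sin x),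
        abs_of_pos (show (0:ℝ) < 2 * Real.sin (a + g - x) by
          have : 0 < Real.sin (a + g - x) :=
            Real.sin_pos_of_pos_of_lt_pi (by linarith [hx.2]) (by linarith [hx.1])
          positivity)]
      exact Real.log_le_log (by positivity) (by linarith)
    · refine ⟨a, ⟨le_rfl, h1.le⟩, ?_⟩
      have hag : a < g := by linarith
      have hsin : Real.sin a < Real.sin g := sin_lt_sin_of_sum_lt_pi ha hag hlt
      have hsa : 0 < Real.sin a := Real.sin_pos_of_pos_of_lt_pi ha (by linarith)
      have : a + g - a = g := by ring
      rw [this]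
      simp only [F, abs_of_pos (by positivity : (0:ℝ) < 2 * Real.sin a),
        abs_of_pos (show (0:ℝ) < 2 * Real.sin g by
          have := Real.sin_pos_of_pos_of_lt_pi hg0 hg_pi; positivity)]
      exact Real.log_lt_log (by positivity) (by linarith)
  have hrefl : (∫ x in a..a', F (a + g - x)) = ∫ x in g'..g, F x := by
    have := intervalIntegral.integral_comp_sub_left (a := a) (b := a') F (a + g)
    rw [this, show a + g - a' = g' by linarith, show a + g - a = g by ring]
  rw [hrefl] at hI
  have e1 : Λ a' = Λ a - ∫ u in a..a', F u := lam_diff Λ hΛ ha (by linarith) ha'0 ha'pi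
  have e2 : Λ g = Λ g' - ∫ u in g'..g, F u := lam_diff Λ hΛ hg'0 hg'pi hg0 hg_pi
  linarith

lemma key_le {a a' g' g : ℝ} (ha : 0 < a) (h1 : a ≤ a') (h2 : a' ≤ g') (h3 : g' ≤ g)
    (hsum : a + g = a' + g') (hlt : a + g < π) :
    Λ a + Λ g ≤ Λ a' + Λ g' := by
  rcases eq_or_lt_of_le h1 with rfl | h1'
  · have : g = g' := by linarith
    rw [this]
  · exact (key Λ hΛ ha h1' h2 h3 hsum hlt).le

lemma pair_le {x y : ℝ} (hx : 0 < x) (hy : 0 < y) (hxy : x + y < π) :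
    Λ x + Λ y ≤ 2 * Λ ((x + y) / 2) := by
  rcases le_total x y with h | h
  · have := key_le Λ hΛ (a := x) (a' := (x+y)/2) (g' := (x+y)/2) (g := y)
      hx (by linarith) le_rfl (by linarith) (by ring) hxy
    linarith
  · have := key_le Λ hΛ (a := y) (a' := (x+y)/2) (g' := (x+y)/2) (g := x)
      hy (by linarith) le_rfl (by linarith) (by ring) (by linarith)
    linarith

lemma pair_lt {x y : ℝ} (hx : 0 < x) (hy : 0 < y) (hxy : x + y < π) (hne : x ≠ y) :
    Λ x + Λ y < 2 * Λ ((x + y) / 2) := by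
  rcases lt_or_gt_of_ne hne with h | h
  · have := key Λ hΛ (a := x) (a' := (x+y)/2) (g' := (x+y)/2) (g := y)
      hx (by linarith) le_rfl (by linarith) (by ring) hxy
    linarith
  · have := key Λ hΛ (a := y) (a' := (x+y)/2) (g' := (x+y)/2) (g := x)
      hy (by linarith) le_rfl (by linarith) (by ring) (by linarith)
    linarith

lemma step2_lt {m : ℝ} (hm0 : 0 < m) (hm2 : m < π / 2) (hne : m ≠ π / 3) :
    2 * Λ m + Λ (π - 2 * m) < 3 * Λ (π / 3) := by
  have hpi := Real.pi_pos
  rcases lt_or_gt_of_ne hne with h | h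
  · -- m < π/3
    have A := key Λ hΛ (a := m) (a' := π/3) (g' := 2*π/3 - m) (g := π - 2*m)
      hm0 h (by linarith) (by linarith) (by ring) (by linarith)
    have B := key Λ hΛ (a := m) (a' := π/3) (g' := π/3) (g := 2*π/3 - m)
      hm0 h le_rfl (by linarith) (by ring) (by linarith)
    linarith
  · -- m > π/3
    have hγ0 : 0 < π - 2*m := by linarith
    have A := key Λ hΛ (a := π - 2*m) (a' := 2*π/3 - m) (g' := π/3) (g := m)
      hγ0 (by linarith) (by linarith) (by linarith) (by ring) (by linarith)
    have B := key Λ hΛ (a := 2*π/3 - m) (a' := π/3) (g' := π/3) (g := m)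
      (by linarith) (by linarith) le_rfl (by linarith) (by ring) (by linarith)
    linarith

lemma step2_le {m : ℝ} (hm0 : 0 < m) (hm2 : m < π / 2) :
    2 * Λ m + Λ (π - 2 * m) ≤ 3 * Λ (π / 3) := by
  rcases eq_or_ne m (π/3) with rfl | hne
  · have : π - 2 * (π/3) = π/3 := by ring
    rw [this]; linarith
  · exact (step2_lt Λ hΛ hm0 hm2 hne).le

end Lam

end LobachevskyAux

open LobachevskyAux

/-- Among triples `(α, β, γ)` of angles in `(0, π)` with `α + β + γ = π`, the sum
`Λ(α) + Λ(β) + Λ(γ)` of values of the Lobachevsky function is maximized exactly at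
`α = β = γ = π/3`. -/
theorem lobachevsky_sum_max
    (Λ : ℝ → ℝ) (hΛ : ∀ θ : ℝ, Λ θ = -∫ u in (0:ℝ)..θ, Real.log |2 * Real.sin u|)
    (α β γ : ℝ) (hα : α ∈ Set.Ioo (0:ℝ) π) (hβ : β ∈ Set.Ioo (0:ℝ) π)
    (hγ : γ ∈ Set.Ioo (0:ℝ) π) (hsum : α + β + γ = π) :
    Λ α + Λ β + Λ γ ≤ 3 * Λ (π / 3) ∧
      (Λ α + Λ β + Λ γ = 3 * Λ (π / 3) ↔ α = π / 3 ∧ β = π / 3 ∧ γ = π / 3) := by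
  obtain ⟨hα0, hαπ⟩ := hα
  obtain ⟨hβ0, hβπ⟩ := hβ
  obtain ⟨hγ0, hγπ⟩ := hγ
  have hpi := Real.pi_pos
  set m : ℝ := (α + β) / 2 with hm_def
  have hm0 : 0 < m := by positivity
  have hm2 : m < π / 2 := by simp only [hm_def]; linarith
  have hγm : γ = π - 2 * m := by simp only [hm_def]; linarith
  have hpair : Λ α + Λ β ≤ 2 * Λ m := pair_le Λ hΛ hα0 hβ0 (by linarith)
  have hstep2 : 2 * Λ m + Λ (π - 2 * m) ≤ 3 * Λ (π / 3) := step2_le Λ hΛ hm0 hm2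
  have hineq : Λ α + Λ β + Λ γ ≤ 3 * Λ (π / 3) := by rw [hγm]; linarith
  refine ⟨hineq, ?_, ?_⟩
  · intro heq
    by_contra hcon
    have hall : ¬(α = π/3 ∧ β = π/3 ∧ γ = π/3) := hcon
    rcases eq_or_ne α β with hab | hab
    · -- α = β, so m = α
      have hmα : m = α := by simp only [hm_def, hab]; ring
      rcases eq_or_ne m (π/3) with hmp | hmp
      · exact hall ⟨by rw [← hmα, hmp], by rw [← hab, ← hmα, hmp],
          by rw [hγm, hmp]; ring⟩
      · have := step2_lt Λ hΛ hm0 hm2 hmp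
        rw [hγm] at heq
        have : Λ α + Λ β + Λ (π - 2*m) < 3 * Λ (π/3) := by
          have h2 : Λ α + Λ β = 2 * Λ m := by rw [hmα, ← hab]; ring
          linarith
        linarith
    · have := pair_lt Λ hΛ hα0 hβ0 (by linarith) hab
      rw [hγm] at heq
      linarith
  · rintro ⟨rfl, rfl, rfl⟩
    ring
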